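/- arXiv:2306.02983 — 2 statements merged into one kernel-verified Lean document; each statement's English description precedes it below -/
import Mathlib

section
/- The term-rewriting system →_R on interactions is confluent: if i →_R* i1 and i →_R* i2 (where →_R* is the reflexive-transitive closure of →_R), then there exists j ∈ I with i1 →_R* j and i2 →_R* j. -/
/-- An atomic communication action: the emission (`isEmission = true`) or
reception (`isEmission = false`) of a message on a lifeline. -/
structure MyAction (L M : Type) where
  lifeline : L
  isEmission : Bool
  message : M

/-- Interaction terms: constants are actions and the empty interaction,
`loopS` is unary, and `strict`, `alt` and `cr ℓ` (for every `ℓ ⊆ L`) are binary.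
`seq = cr ∅` and `par = cr Set.univ`. -/
inductive Interaction (L M : Type) : Type where
  | empty : Interaction L M
  | act : MyAction L M → Interaction L M
  | loopS : Interaction L M → Interaction L M
  | strict : Interaction L M → Interaction L M → Interaction L M
  | alt : Interaction L M → Interaction L M → Interaction L M
  | cr : Set L → Interaction L M → Interaction L M → Interaction L M

namespace Interaction

variable {L M : Type}

/-- The evasion predicate `i ↓ ℓ`. -/
inductive Evades : Interaction L M → Set L → Prop where
  | empty (ℓ : Set L) : Evades .empty ℓ
  | act (a : MyAction L M) (ℓ : Set L) : a.lifeline ∉ ℓ → Evades (.act a) ℓ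
  | altL {i1 i2 : Interaction L M} {ℓ} : Evades i1 ℓ → Evades (.alt i1 i2) ℓ
  | altR {i1 i2 : Interaction L M} {ℓ} : Evades i2 ℓ → Evades (.alt i1 i2) ℓ
  | strict {i1 i2 : Interaction L M} {ℓ} : Evades i1 ℓ → Evades i2 ℓ →
      Evades (.strict i1 i2) ℓ
  | cr {i1 i2 : Interaction L M} {ℓ' ℓ} : Evades i1 ℓ → Evades i2 ℓ →
      Evades (.cr ℓ' i1 i2) ℓ
  | loopS (i1 : Interaction L M) (ℓ : Set L) : Evades (.loopS i1) ℓ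

/-- The pruning relation `i ⤳ℓ i'`. -/
inductive Prune : Interaction L M → Set L → Interaction L M → Prop where
  | empty (ℓ : Set L) : Prune .empty ℓ .empty
  | act (a : MyAction L M) (ℓ : Set L) : a.lifeline ∉ ℓ → Prune (.act a) ℓ (.act a)
  | altL {i1 i2 i1' : Interaction L M} {ℓ} : Prune i1 ℓ i1' → ¬ Evades i2 ℓ →
      Prune (.alt i1 i2) ℓ i1'
  | altR {i1 i2 i2' : Interaction L M} {ℓ} : Prune i2 ℓ i2' → ¬ Evades i1 ℓ →
      Prune (.alt i1 i2) ℓ i2'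
  | altBoth {i1 i2 i1' i2' : Interaction L M} {ℓ} : Prune i1 ℓ i1' → Prune i2 ℓ i2' →
      Prune (.alt i1 i2) ℓ (.alt i1' i2')
  | strict {i1 i2 i1' i2' : Interaction L M} {ℓ} : Prune i1 ℓ i1' → Prune i2 ℓ i2' →
      Prune (.strict i1 i2) ℓ (.strict i1' i2')
  | cr {i1 i2 i1' i2' : Interaction L M} {ℓ' ℓ} : Prune i1 ℓ i1' → Prune i2 ℓ i2' →
      Prune (.cr ℓ' i1 i2) ℓ (.cr ℓ' i1' i2')
  | loopS {i1 i1' : Interaction L M} {ℓ} : Prune i1 ℓ i1' →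
      Prune (.loopS i1) ℓ (.loopS i1')
  | loopSElim {i1 : Interaction L M} {ℓ} : ¬ Evades i1 ℓ → Prune (.loopS i1) ℓ .empty

/-- The non-expression predicate `i ̸→a`. -/
inductive NoExpr : Interaction L M → MyAction L M → Prop where
  | empty (a : MyAction L M) : NoExpr .empty a
  | act {a' a : MyAction L M} : a' ≠ a → NoExpr (.act a') a
  | loopS {i1 : Interaction L M} {a} : NoExpr i1 a → NoExpr (.loopS i1) a
  | strictNoEvade {i1 i2 : Interaction L M} {a} : NoExpr i1 a →
      ¬ Evades i1 Set.univ → NoExpr (.strict i1 i2) a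
  | strictBoth {i1 i2 : Interaction L M} {a} : NoExpr i1 a →
      NoExpr i2 a → NoExpr (.strict i1 i2) a
  | crNoEvade {i1 i2 : Interaction L M} {ℓ a} : NoExpr i1 a →
      ¬ Evades i1 ({a.lifeline} \ ℓ) → NoExpr (.cr ℓ i1 i2) a
  | crBoth {i1 i2 : Interaction L M} {ℓ a} : NoExpr i1 a →
      NoExpr i2 a → NoExpr (.cr ℓ i1 i2) a
  | alt {i1 i2 : Interaction L M} {a} : NoExpr i1 a → NoExpr i2 a →
      NoExpr (.alt i1 i2) a

/-- The execution relation `i →a i'`. -/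
inductive Exec : Interaction L M → MyAction L M → Interaction L M → Prop where
  | act (a : MyAction L M) : Exec (.act a) a .empty
  | loop {i1 i1' : Interaction L M} {a} : Exec i1 a i1' →
      Exec (.loopS i1) a (.strict i1' (.loopS i1))
  | strictL {i1 i2 i1' : Interaction L M} {a} : Exec i1 a i1' →
      Exec (.strict i1 i2) a (.strict i1' i2)
  | crL {i1 i2 i1' : Interaction L M} {ℓ a} : Exec i1 a i1' →
      Exec (.cr ℓ i1 i2) a (.cr ℓ i1' i2)
  | strictR {i1 i2 i2' : Interaction L M} {a} : Exec i2 a i2' → Evades i1 Set.univ →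
      Exec (.strict i1 i2) a i2'
  | crR {i1 i2 i1' i2' : Interaction L M} {ℓ a} : Exec i2 a i2' →
      Prune i1 ({a.lifeline} \ ℓ) i1' → Exec (.cr ℓ i1 i2) a (.cr ℓ i1' i2')
  | altChoiceL {i1 i2 i1' : Interaction L M} {a} : Exec i1 a i1' → NoExpr i2 a →
      Exec (.alt i1 i2) a i1'
  | altChoiceR {i1 i2 i2' : Interaction L M} {a} : Exec i2 a i2' → NoExpr i1 a →
      Exec (.alt i1 i2) a i2'
  | altDelay {i1 i2 i1' i2' : Interaction L M} {a} : Exec i1 a i1' → Exec i2 a i2' →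
      Exec (.alt i1 i2) a (.alt i1' i2')

/-- The trace semantics `σ(i)`, as a predicate: `Sem i t` iff `t ∈ σ(i)`. -/
inductive Sem : Interaction L M → List (MyAction L M) → Prop where
  | nil {i : Interaction L M} : Evades i Set.univ → Sem i []
  | cons {i i' : Interaction L M} {a t} : Exec i a i' → Sem i' t → Sem i (a :: t)

/-- One execution step: `i → i'` iff `i →a i'` for some action `a`. -/
def Step (i i' : Interaction L M) : Prop := ∃ a, Exec i a i'

/-- `reach i = { i' | i →* i' }`. -/
def Reach (i : Interaction L M) : Set (Interaction L M) :=
  {i' | Relation.ReflTransGen Step i i'}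

/-- One-step rewriting by the simplification system `R`, closed under contexts. -/
inductive Rw : Interaction L M → Interaction L M → Prop where
  | strictEmptyL (x : Interaction L M) : Rw (.strict .empty x) x
  | strictEmptyR (x : Interaction L M) : Rw (.strict x .empty) x
  | crEmptyL (ℓ : Set L) (x : Interaction L M) : Rw (.cr ℓ .empty x) x
  | crEmptyR (ℓ : Set L) (x : Interaction L M) : Rw (.cr ℓ x .empty) x
  | altEmptyLoop (x : Interaction L M) : Rw (.alt .empty (.loopS x)) (.loopS x)
  | altLoopEmpty (x : Interaction L M) : Rw (.alt (.loopS x) .empty) (.loopS x)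
  | altEmptyEmpty : Rw (Interaction.alt (L := L) (M := M) .empty .empty) .empty
  | loopEmpty : Rw (Interaction.loopS (L := L) (M := M) .empty) .empty
  | loopCongr {i i' : Interaction L M} : Rw i i' → Rw (.loopS i) (.loopS i')
  | strictCongrL {i1 i1' i2 : Interaction L M} : Rw i1 i1' →
      Rw (.strict i1 i2) (.strict i1' i2)
  | strictCongrR {i1 i2 i2' : Interaction L M} : Rw i2 i2' →
      Rw (.strict i1 i2) (.strict i1 i2')
  | altCongrL {i1 i1' i2 : Interaction L M} : Rw i1 i1' → Rw (.alt i1 i2) (.alt i1' i2)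
  | altCongrR {i1 i2 i2' : Interaction L M} : Rw i2 i2' → Rw (.alt i1 i2) (.alt i1 i2')
  | crCongrL {i1 i1' i2 : Interaction L M} {ℓ} : Rw i1 i1' →
      Rw (.cr ℓ i1 i2) (.cr ℓ i1' i2)
  | crCongrR {i1 i2 i2' : Interaction L M} {ℓ} : Rw i2 i2' →
      Rw (.cr ℓ i1 i2) (.cr ℓ i1 i2')

end Interaction

open Interaction

/-!
Every interaction rewrites to a canonical representative `normalize i`, computed bottom-up
by smart constructors that apply the rules of `R` at the root whenever they match. Each rule
of `R` leaves `normalize` unchanged, because the smart constructors absorb exactly the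
redexes that the rules remove. Hence any two reducts of `i` both rewrite to `normalize i`.
-/

namespace Relation

theorem join_reflTransGen_of_normalizer {α : Type*} {r : α → α → Prop} (f : α → α)
    (reaches : ∀ a, ReflTransGen r a (f a)) (invariant : ∀ a b, r a b → f a = f b)
    {a b c : α} (hab : ReflTransGen r a b) (hac : ReflTransGen r a c) :
    Join (ReflTransGen r) b c := by
  have eq_of_reduces {x y : α} (h : ReflTransGen r x y) : f x = f y := by
    induction h with
    | refl => rfl
    | tail _ hstep ih => exact ih.trans (invariant _ _ hstep)
  exact ⟨f a, eq_of_reduces hab ▸ reaches b, eq_of_reduces hac ▸ reaches c⟩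

end Relation

namespace Interaction

open Relation

variable {L M : Type}

def mkLoop : Interaction L M → Interaction L M
  | .empty => .empty
  | j => .loopS j

def mkStrict : Interaction L M → Interaction L M → Interaction L M
  | .empty, b => b
  | a, .empty => a
  | a, b => .strict a b

def mkCr (ℓ : Set L) : Interaction L M → Interaction L M → Interaction L M
  | .empty, b => b
  | a, .empty => a
  | a, b => .cr ℓ a b

def mkAlt : Interaction L M → Interaction L M → Interaction L M
  | .empty, .empty => .empty
  | .empty, .loopS x => .loopS x
  | .loopS x, .empty => .loopS x
  | a, b => .alt a b

def normalize : Interaction L M → Interaction L M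
  | .empty => .empty
  | .act a => .act a
  | .loopS i => mkLoop (normalize i)
  | .strict i1 i2 => mkStrict (normalize i1) (normalize i2)
  | .alt i1 i2 => mkAlt (normalize i1) (normalize i2)
  | .cr ℓ i1 i2 => mkCr ℓ (normalize i1) (normalize i2)

theorem reflTransGen_rw_loopS {a b : Interaction L M} (h : ReflTransGen Rw a b) :
    ReflTransGen Rw (.loopS a) (.loopS b) :=
  h.lift loopS fun _ _ => Rw.loopCongr

theorem reflTransGen_rw_strict {a b a' b' : Interaction L M} (ha : ReflTransGen Rw a a')
    (hb : ReflTransGen Rw b b') : ReflTransGen Rw (.strict a b) (.strict a' b') :=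
  (ha.lift (strict · b) fun _ _ => Rw.strictCongrL).trans
    (hb.lift (strict a' ·) fun _ _ => Rw.strictCongrR)

theorem reflTransGen_rw_alt {a b a' b' : Interaction L M} (ha : ReflTransGen Rw a a')
    (hb : ReflTransGen Rw b b') : ReflTransGen Rw (.alt a b) (.alt a' b') :=
  (ha.lift (alt · b) fun _ _ => Rw.altCongrL).trans
    (hb.lift (alt a' ·) fun _ _ => Rw.altCongrR)

theorem reflTransGen_rw_cr {ℓ : Set L} {a b a' b' : Interaction L M}
    (ha : ReflTransGen Rw a a') (hb : ReflTransGen Rw b b') :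
    ReflTransGen Rw (.cr ℓ a b) (.cr ℓ a' b') :=
  (ha.lift (cr ℓ · b) fun _ _ => Rw.crCongrL).trans
    (hb.lift (cr ℓ a' ·) fun _ _ => Rw.crCongrR)

theorem reflTransGen_rw_mkLoop (a : Interaction L M) :
    ReflTransGen Rw (.loopS a) (mkLoop a) := by
  cases a <;> first | exact .single Rw.loopEmpty | exact .refl

theorem reflTransGen_rw_mkStrict (a b : Interaction L M) :
    ReflTransGen Rw (.strict a b) (mkStrict a b) := by
  cases a <;> cases b <;>
    first | exact .single (Rw.strictEmptyL _) | exact .single (Rw.strictEmptyR _) | exact .refl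

theorem reflTransGen_rw_mkCr (ℓ : Set L) (a b : Interaction L M) :
    ReflTransGen Rw (.cr ℓ a b) (mkCr ℓ a b) := by
  cases a <;> cases b <;>
    first | exact .single (Rw.crEmptyL _ _) | exact .single (Rw.crEmptyR _ _) | exact .refl

theorem reflTransGen_rw_mkAlt (a b : Interaction L M) :
    ReflTransGen Rw (.alt a b) (mkAlt a b) := by
  cases a <;> cases b <;>
    first
      | exact .single Rw.altEmptyEmpty
      | exact .single (Rw.altEmptyLoop _)
      | exact .single (Rw.altLoopEmpty _)
      | exact .refl

theorem reflTransGen_rw_normalize (i : Interaction L M) : ReflTransGen Rw i (normalize i) := by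
  induction i with
  | empty | act => exact .refl
  | loopS _ ih => exact (reflTransGen_rw_loopS ih).trans (reflTransGen_rw_mkLoop _)
  | strict _ _ ih1 ih2 =>
    exact (reflTransGen_rw_strict ih1 ih2).trans (reflTransGen_rw_mkStrict _ _)
  | alt _ _ ih1 ih2 => exact (reflTransGen_rw_alt ih1 ih2).trans (reflTransGen_rw_mkAlt _ _)
  | cr _ _ _ ih1 ih2 => exact (reflTransGen_rw_cr ih1 ih2).trans (reflTransGen_rw_mkCr _ _ _)

theorem mkStrict_empty_left (a : Interaction L M) : mkStrict .empty a = a := by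
  cases a <;> rfl

theorem mkStrict_empty_right (a : Interaction L M) : mkStrict a .empty = a := by
  cases a <;> rfl

theorem mkCr_empty_left (ℓ : Set L) (a : Interaction L M) : mkCr ℓ .empty a = a := by
  cases a <;> rfl

theorem mkCr_empty_right (ℓ : Set L) (a : Interaction L M) : mkCr ℓ a .empty = a := by
  cases a <;> rfl

theorem mkAlt_empty_mkLoop (a : Interaction L M) : mkAlt .empty (mkLoop a) = mkLoop a := by
  cases a <;> rfl

theorem mkAlt_mkLoop_empty (a : Interaction L M) : mkAlt (mkLoop a) .empty = mkLoop a := by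
  cases a <;> rfl

theorem normalize_eq_of_rw {i i' : Interaction L M} (h : Rw i i') : normalize i = normalize i' := by
  induction h with
  | strictEmptyL => exact mkStrict_empty_left _
  | strictEmptyR => exact mkStrict_empty_right _
  | crEmptyL => exact mkCr_empty_left _ _
  | crEmptyR => exact mkCr_empty_right _ _
  | altEmptyLoop => exact mkAlt_empty_mkLoop _
  | altLoopEmpty => exact mkAlt_mkLoop_empty _
  | altEmptyEmpty | loopEmpty => rfl
  | loopCongr _ ih | strictCongrL _ ih | strictCongrR _ ih | altCongrL _ ih | altCongrR _ ih
    | crCongrL _ ih | crCongrR _ ih => simp only [normalize, ih]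

end Interaction

theorem rw_confluent_general {L M : Type} (i i1 i2 : Interaction L M)
    (h1 : Relation.ReflTransGen Rw i i1) (h2 : Relation.ReflTransGen Rw i i2) :
    ∃ j, Relation.ReflTransGen Rw i1 j ∧ Relation.ReflTransGen Rw i2 j :=
  Relation.join_reflTransGen_of_normalizer normalize reflTransGen_rw_normalize
    (fun _ _ => normalize_eq_of_rw) h1 h2

/-- the rewriting system `→_R` is confluent. -/
theorem rw_confluent {L M : Type} [Finite L] [Finite M] (i i1 i2 : Interaction L M)
    (h1 : Relation.ReflTransGen Rw i i1) (h2 : Relation.ReflTransGen Rw i i2) :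
    ∃ j, Relation.ReflTransGen Rw i1 j ∧ Relation.ReflTransGen Rw i2 j :=
  rw_confluent_general i i1 i2 h1 h2
end

section
/- Every one-step rewrite of the simplification system preserves the trace semantics: for all interactions i, i' ∈ I, if i →_R i' then σ(i) = σ(i'). -/
open Interaction

/-!
Let `≡` be the equivalence closure of `Rw`. The rules only delete inert material (`∅` is a
unit of `strict` and `cr ℓ`; `∅` never executes and, like a loop, evades everything, so
`alt ∅ (loopS x)` behaves as `loopS x`), but pruning or executing the two sides of a rule
yields derivatives that are again related by rewrites rather than equal: pruning `strict ∅ x`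
gives `strict ∅ x'`, not `x'`. So we show that every rewrite step, in both directions, preserves evasion and is a simulation
up to `≡` for pruning and for execution. At the root this is a case check; under a context it
follows because every operator is compatible with such simulations. The negative premises
`NoExpr` of the `alt` rules are handled through `NoExpr i a ↔ ∀ j, ¬ Exec i a j`, which is why
both directions are carried along. Induction on the trace then gives `σ(i) = σ(i')`.
-/

open Relation

namespace Interaction

variable {L M : Type}

section Evasion

@[simp] lemma evades_empty (ℓ : Set L) : Evades (empty : Interaction L M) ℓ := .empty ℓ

@[simp] lemma evades_loopS (i : Interaction L M) (ℓ : Set L) : Evades (loopS i) ℓ :=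
  .loopS i ℓ

@[simp] lemma evades_strict_iff {i1 i2 : Interaction L M} {ℓ : Set L} :
    Evades (strict i1 i2) ℓ ↔ Evades i1 ℓ ∧ Evades i2 ℓ :=
  ⟨fun h => by cases h with | strict h1 h2 => exact ⟨h1, h2⟩,
   fun ⟨h1, h2⟩ => .strict h1 h2⟩

@[simp] lemma evades_alt_iff {i1 i2 : Interaction L M} {ℓ : Set L} :
    Evades (alt i1 i2) ℓ ↔ Evades i1 ℓ ∨ Evades i2 ℓ :=
  ⟨fun h => by cases h with
    | altL h => exact .inl h
    | altR h => exact .inr h,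
   by rintro (h | h); exacts [.altL h, .altR h]⟩

@[simp] lemma evades_cr_iff {ℓ' : Set L} {i1 i2 : Interaction L M} {ℓ : Set L} :
    Evades (cr ℓ' i1 i2) ℓ ↔ Evades i1 ℓ ∧ Evades i2 ℓ :=
  ⟨fun h => by cases h with | cr h1 h2 => exact ⟨h1, h2⟩,
   fun ⟨h1, h2⟩ => .cr h1 h2⟩

lemma evades_iff_of_rw {i i' : Interaction L M} (h : Rw i i') (ℓ : Set L) :
    Evades i ℓ ↔ Evades i' ℓ := by
  induction h <;> simp [*]

lemma evades_iff_of_eqvGen {i i' : Interaction L M} (h : EqvGen Rw i i') (ℓ : Set L) :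
    Evades i ℓ ↔ Evades i' ℓ := by
  induction h with
  | rel _ _ h => exact evades_iff_of_rw h ℓ
  | refl => exact .rfl
  | symm _ _ _ ih => exact ih.symm
  | trans _ _ _ _ _ ih1 ih2 => exact ih1.trans ih2

end Evasion

section Expression

lemma Prune.evades {i i' : Interaction L M} {ℓ : Set L} (h : Prune i ℓ i') : Evades i ℓ := by
  induction h with
  | act a ℓ hn => exact .act a ℓ hn
  | _ => simp_all

lemma exists_prune_of_evades {i : Interaction L M} {ℓ : Set L} (h : Evades i ℓ) :
    ∃ i', Prune i ℓ i' := by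
  induction i with
  | empty => exact ⟨_, .empty ℓ⟩
  | act a => cases h with | act _ _ hn => exact ⟨_, .act a ℓ hn⟩
  | loopS i1 ih =>
    by_cases h1 : Evades i1 ℓ
    · obtain ⟨_, p1⟩ := ih h1
      exact ⟨_, .loopS p1⟩
    · exact ⟨_, .loopSElim h1⟩
  | strict i1 i2 ih1 ih2 =>
    obtain ⟨_, p1⟩ := ih1 (evades_strict_iff.mp h).1
    obtain ⟨_, p2⟩ := ih2 (evades_strict_iff.mp h).2
    exact ⟨_, .strict p1 p2⟩
  | alt i1 i2 ih1 ih2 =>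
    by_cases h1 : Evades i1 ℓ <;> by_cases h2 : Evades i2 ℓ
    · obtain ⟨_, p1⟩ := ih1 h1
      obtain ⟨_, p2⟩ := ih2 h2
      exact ⟨_, .altBoth p1 p2⟩
    · obtain ⟨_, p1⟩ := ih1 h1
      exact ⟨_, .altL p1 h2⟩
    · obtain ⟨_, p2⟩ := ih2 h2
      exact ⟨_, .altR p2 h1⟩
    · exact absurd (evades_alt_iff.mp h) (by tauto)
  | cr ℓ' i1 i2 ih1 ih2 =>
    obtain ⟨_, p1⟩ := ih1 (evades_cr_iff.mp h).1
    obtain ⟨_, p2⟩ := ih2 (evades_cr_iff.mp h).2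
    exact ⟨_, .cr p1 p2⟩

lemma NoExpr.not_exec {i : Interaction L M} {a : MyAction L M} (h : NoExpr i a)
    (j : Interaction L M) : ¬ Exec i a j := by
  induction h generalizing j with
  | empty => nofun
  | act hne => intro hj; cases hj; exact hne rfl
  | loopS _ ih => intro hj; cases hj with | loop h1 => exact ih _ h1
  | strictNoEvade _ hne ih =>
    intro hj
    cases hj with
    | strictL h1 => exact ih _ h1
    | strictR _ hev => exact hne hev
  | strictBoth _ _ ih1 ih2 =>
    intro hj
    cases hj with
    | strictL h1 => exact ih1 _ h1
    | strictR h2 _ => exact ih2 _ h2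
  | crNoEvade _ hne ih =>
    intro hj
    cases hj with
    | crL h1 => exact ih _ h1
    | crR _ hp => exact hne hp.evades
  | crBoth _ _ ih1 ih2 =>
    intro hj
    cases hj with
    | crL h1 => exact ih1 _ h1
    | crR h2 _ => exact ih2 _ h2
  | alt _ _ ih1 ih2 =>
    intro hj
    cases hj with
    | altChoiceL h1 _ | altDelay h1 _ => exact ih1 _ h1
    | altChoiceR h2 _ => exact ih2 _ h2

lemma noExpr_of_forall_not_exec {i : Interaction L M} {a : MyAction L M}
    (h : ∀ j, ¬ Exec i a j) : NoExpr i a := by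
  induction i with
  | empty => exact .empty a
  | act a' => exact .act fun he => by subst he; exact h _ (.act a')
  | loopS i1 ih => exact .loopS (ih fun j hj => h _ (.loop hj))
  | strict i1 i2 ih1 ih2 =>
    have h1 : NoExpr i1 a := ih1 fun j hj => h _ (.strictL hj)
    by_cases he : Evades i1 Set.univ
    · exact .strictBoth h1 (ih2 fun j hj => h _ (.strictR hj he))
    · exact .strictNoEvade h1 he
  | alt i1 i2 ih1 ih2 =>
    have h1 : NoExpr i1 a := ih1 fun j1 e1 => by
      by_cases e2 : ∃ j2, Exec i2 a j2
      · obtain ⟨j2, e2⟩ := e2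
        exact h _ (.altDelay e1 e2)
      · exact h _ (.altChoiceL e1 (ih2 fun j2 hj2 => e2 ⟨j2, hj2⟩))
    exact .alt h1 (ih2 fun j2 e2 => h _ (.altChoiceR e2 h1))
  | cr ℓ i1 i2 ih1 ih2 =>
    have h1 : NoExpr i1 a := ih1 fun j hj => h _ (.crL hj)
    by_cases he : Evades i1 ({a.lifeline} \ ℓ)
    · obtain ⟨_, hp⟩ := exists_prune_of_evades he
      exact .crBoth h1 (ih2 fun j hj => h _ (.crR hj hp))
    · exact .crNoEvade h1 he

end Expression

section Congruence

variable {i1 i1' i2 i2' : Interaction L M}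

lemma eqvGen_rw_map {f : Interaction L M → Interaction L M}
    (hf : ∀ {x y}, Rw x y → Rw (f x) (f y)) {x y : Interaction L M} (h : EqvGen Rw x y) :
    EqvGen Rw (f x) (f y) := by
  induction h with
  | rel _ _ h => exact .rel _ _ (hf h)
  | refl => exact .refl _
  | symm _ _ _ ih => exact .symm _ _ ih
  | trans _ _ _ _ _ ih1 ih2 => exact .trans _ _ _ ih1 ih2

lemma eqvGen_rw_loopS (h : EqvGen Rw i1 i1') : EqvGen Rw (loopS i1) (loopS i1') :=
  eqvGen_rw_map .loopCongr h

lemma eqvGen_rw_strict (h1 : EqvGen Rw i1 i1') (h2 : EqvGen Rw i2 i2') :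
    EqvGen Rw (strict i1 i2) (strict i1' i2') :=
  .trans _ _ _ (eqvGen_rw_map (f := (strict · i2)) .strictCongrL h1)
    (eqvGen_rw_map .strictCongrR h2)

lemma eqvGen_rw_alt (h1 : EqvGen Rw i1 i1') (h2 : EqvGen Rw i2 i2') :
    EqvGen Rw (alt i1 i2) (alt i1' i2') :=
  .trans _ _ _ (eqvGen_rw_map (f := (alt · i2)) .altCongrL h1) (eqvGen_rw_map .altCongrR h2)

lemma eqvGen_rw_cr {ℓ : Set L} (h1 : EqvGen Rw i1 i1') (h2 : EqvGen Rw i2 i2') :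
    EqvGen Rw (cr ℓ i1 i2) (cr ℓ i1' i2') :=
  .trans _ _ _ (eqvGen_rw_map (f := (cr ℓ · i2)) .crCongrL h1) (eqvGen_rw_map .crCongrR h2)

end Congruence

inductive RwRoot : Interaction L M → Interaction L M → Prop where
  | strictEmptyL (x : Interaction L M) : RwRoot (.strict .empty x) x
  | strictEmptyR (x : Interaction L M) : RwRoot (.strict x .empty) x
  | crEmptyL (ℓ : Set L) (x : Interaction L M) : RwRoot (.cr ℓ .empty x) x
  | crEmptyR (ℓ : Set L) (x : Interaction L M) : RwRoot (.cr ℓ x .empty) x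
  | altEmptyLoop (x : Interaction L M) : RwRoot (.alt .empty (.loopS x)) (.loopS x)
  | altLoopEmpty (x : Interaction L M) : RwRoot (.alt (.loopS x) .empty) (.loopS x)
  | altEmptyEmpty : RwRoot (.alt .empty .empty) .empty
  | loopEmpty : RwRoot (.loopS .empty) .empty

def Simulates {α : Type} (R : Interaction L M → α → Interaction L M → Prop)
    (i i' : Interaction L M) : Prop :=
  ∀ x j, R i x j → ∃ j', R i' x j' ∧ EqvGen Rw j j'

lemma Simulates.refl {α : Type} {R : Interaction L M → α → Interaction L M → Prop}
    (i : Interaction L M) : Simulates R i i :=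
  fun _ j h => ⟨j, h, .refl j⟩

lemma Simulates.trans {α : Type} {R : Interaction L M → α → Interaction L M → Prop}
    {i1 i2 i3 : Interaction L M} (h12 : Simulates R i1 i2) (h23 : Simulates R i2 i3) :
    Simulates R i1 i3 := fun x j h => by
  obtain ⟨j2, h2, e12⟩ := h12 x j h
  obtain ⟨j3, h3, e23⟩ := h23 x j2 h2
  exact ⟨j3, h3, .trans _ _ _ e12 e23⟩

section Pruning

variable {i1 i1' i2 i2' : Interaction L M}

lemma Prune.eqvGen_rw_alt_empty {x p : Interaction L M} {ℓ : Set L} (h : Prune (.loopS x) ℓ p) :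
    EqvGen Rw (.alt .empty p) p ∧ EqvGen Rw (.alt p .empty) p := by
  cases h with
  | loopS _ => exact ⟨.rel _ _ (.altEmptyLoop _), .rel _ _ (.altLoopEmpty _)⟩
  | loopSElim _ => exact ⟨.rel _ _ .altEmptyEmpty, .rel _ _ .altEmptyEmpty⟩

lemma simulates_prune_of_rwRoot {i i' : Interaction L M} (h : RwRoot i i') :
    Simulates Prune i i' ∧ Simulates Prune i' i := by
  cases h with
  | strictEmptyL x =>
    refine ⟨fun ℓ p hp => ?_, fun ℓ p hp =>
      ⟨_, .strict (.empty ℓ) hp, .symm _ _ (.rel _ _ (.strictEmptyL p))⟩⟩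
    cases hp with | strict p1 p2 => cases p1; exact ⟨_, p2, .rel _ _ (.strictEmptyL _)⟩
  | strictEmptyR x =>
    refine ⟨fun ℓ p hp => ?_, fun ℓ p hp =>
      ⟨_, .strict hp (.empty ℓ), .symm _ _ (.rel _ _ (.strictEmptyR p))⟩⟩
    cases hp with | strict p1 p2 => cases p2; exact ⟨_, p1, .rel _ _ (.strictEmptyR _)⟩
  | crEmptyL ℓ' x =>
    refine ⟨fun ℓ p hp => ?_, fun ℓ p hp =>
      ⟨_, .cr (.empty ℓ) hp, .symm _ _ (.rel _ _ (.crEmptyL ℓ' p))⟩⟩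
    cases hp with | cr p1 p2 => cases p1; exact ⟨_, p2, .rel _ _ (.crEmptyL _ _)⟩
  | crEmptyR ℓ' x =>
    refine ⟨fun ℓ p hp => ?_, fun ℓ p hp =>
      ⟨_, .cr hp (.empty ℓ), .symm _ _ (.rel _ _ (.crEmptyR ℓ' p))⟩⟩
    cases hp with | cr p1 p2 => cases p2; exact ⟨_, p1, .rel _ _ (.crEmptyR _ _)⟩
  | altEmptyLoop x =>
    refine ⟨fun ℓ p hp => ?_, fun ℓ p hp =>
      ⟨_, .altBoth (.empty ℓ) hp, .symm _ _ hp.eqvGen_rw_alt_empty.1⟩⟩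
    cases hp with
    | altL _ hne => exact absurd (.loopS x ℓ) hne
    | altR _ hne => exact absurd (.empty ℓ) hne
    | altBoth p1 p2 => cases p1; exact ⟨_, p2, p2.eqvGen_rw_alt_empty.1⟩
  | altLoopEmpty x =>
    refine ⟨fun ℓ p hp => ?_, fun ℓ p hp =>
      ⟨_, .altBoth hp (.empty ℓ), .symm _ _ hp.eqvGen_rw_alt_empty.2⟩⟩
    cases hp with
    | altL _ hne => exact absurd (.empty ℓ) hne
    | altR _ hne => exact absurd (.loopS x ℓ) hne
    | altBoth p1 p2 => cases p2; exact ⟨_, p1, p1.eqvGen_rw_alt_empty.2⟩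
  | altEmptyEmpty =>
    refine ⟨fun ℓ p hp => ?_, fun ℓ p hp => ?_⟩
    · cases hp with
      | altL _ hne | altR _ hne => exact absurd (.empty ℓ) hne
      | altBoth p1 p2 => cases p1; cases p2; exact ⟨_, .empty ℓ, .rel _ _ .altEmptyEmpty⟩
    · cases hp
      exact ⟨_, .altBoth (.empty ℓ) (.empty ℓ), .symm _ _ (.rel _ _ .altEmptyEmpty)⟩
  | loopEmpty =>
    refine ⟨fun ℓ p hp => ?_, fun ℓ p hp => ?_⟩
    · cases hp with
      | loopS p1 => cases p1; exact ⟨_, .empty ℓ, .rel _ _ .loopEmpty⟩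
      | loopSElim hne => exact absurd (.empty ℓ) hne
    · cases hp
      exact ⟨_, .loopS (.empty ℓ), .symm _ _ (.rel _ _ .loopEmpty)⟩

lemma simulates_prune_loopS (h : Simulates Prune i1 i1')
    (hev : ∀ ℓ, Evades i1' ℓ → Evades i1 ℓ) : Simulates Prune (loopS i1) (loopS i1') := by
  intro ℓ p hp
  cases hp with
  | loopS p1 =>
    obtain ⟨_, p1', e⟩ := h ℓ _ p1
    exact ⟨_, .loopS p1', eqvGen_rw_loopS e⟩
  | loopSElim hne => exact ⟨_, .loopSElim (mt (hev ℓ) hne), .refl _⟩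

lemma simulates_prune_strict (h1 : Simulates Prune i1 i1') (h2 : Simulates Prune i2 i2') :
    Simulates Prune (strict i1 i2) (strict i1' i2') := by
  intro ℓ p hp
  cases hp with
  | strict p1 p2 =>
    obtain ⟨_, p1', e1⟩ := h1 ℓ _ p1
    obtain ⟨_, p2', e2⟩ := h2 ℓ _ p2
    exact ⟨_, .strict p1' p2', eqvGen_rw_strict e1 e2⟩

lemma simulates_prune_cr {ℓ' : Set L} (h1 : Simulates Prune i1 i1')
    (h2 : Simulates Prune i2 i2') : Simulates Prune (cr ℓ' i1 i2) (cr ℓ' i1' i2') := by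
  intro ℓ p hp
  cases hp with
  | cr p1 p2 =>
    obtain ⟨_, p1', e1⟩ := h1 ℓ _ p1
    obtain ⟨_, p2', e2⟩ := h2 ℓ _ p2
    exact ⟨_, .cr p1' p2', eqvGen_rw_cr e1 e2⟩

lemma simulates_prune_alt (h1 : Simulates Prune i1 i1') (h2 : Simulates Prune i2 i2')
    (hev1 : ∀ ℓ, Evades i1' ℓ → Evades i1 ℓ)
    (hev2 : ∀ ℓ, Evades i2' ℓ → Evades i2 ℓ) :
    Simulates Prune (alt i1 i2) (alt i1' i2') := by
  intro ℓ p hp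
  cases hp with
  | altL p1 hne =>
    obtain ⟨_, p1', e1⟩ := h1 ℓ _ p1
    exact ⟨_, .altL p1' (mt (hev2 ℓ) hne), e1⟩
  | altR p2 hne =>
    obtain ⟨_, p2', e2⟩ := h2 ℓ _ p2
    exact ⟨_, .altR p2' (mt (hev1 ℓ) hne), e2⟩
  | altBoth p1 p2 =>
    obtain ⟨_, p1', e1⟩ := h1 ℓ _ p1
    obtain ⟨_, p2', e2⟩ := h2 ℓ _ p2
    exact ⟨_, .altBoth p1' p2', eqvGen_rw_alt e1 e2⟩

lemma simulates_prune_of_rw {i i' : Interaction L M} (h : Rw i i') :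
    Simulates Prune i i' ∧ Simulates Prune i' i := by
  induction h with
  | loopCongr hr ih =>
    exact ⟨simulates_prune_loopS ih.1 fun ℓ => (evades_iff_of_rw hr ℓ).2,
      simulates_prune_loopS ih.2 fun ℓ => (evades_iff_of_rw hr ℓ).1⟩
  | strictCongrL _ ih =>
    exact ⟨simulates_prune_strict ih.1 (.refl _), simulates_prune_strict ih.2 (.refl _)⟩
  | strictCongrR _ ih =>
    exact ⟨simulates_prune_strict (.refl _) ih.1, simulates_prune_strict (.refl _) ih.2⟩
  | crCongrL _ ih =>
    exact ⟨simulates_prune_cr ih.1 (.refl _), simulates_prune_cr ih.2 (.refl _)⟩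
  | crCongrR _ ih =>
    exact ⟨simulates_prune_cr (.refl _) ih.1, simulates_prune_cr (.refl _) ih.2⟩
  | altCongrL hr ih =>
    have hev := evades_iff_of_rw hr
    exact ⟨simulates_prune_alt ih.1 (.refl _) (fun ℓ => (hev ℓ).2) fun _ => id,
      simulates_prune_alt ih.2 (.refl _) (fun ℓ => (hev ℓ).1) fun _ => id⟩
  | altCongrR hr ih =>
    have hev := evades_iff_of_rw hr
    exact ⟨simulates_prune_alt (.refl _) ih.1 (fun _ => id) fun ℓ => (hev ℓ).2,
      simulates_prune_alt (.refl _) ih.2 (fun _ => id) fun ℓ => (hev ℓ).1⟩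
  | _ => exact simulates_prune_of_rwRoot (by constructor)

end Pruning

section Execution

variable {i1 i1' i2 i2' : Interaction L M}

lemma NoExpr.of_simulates {i i' : Interaction L M} {a : MyAction L M} (hn : NoExpr i a)
    (h : Simulates Exec i' i) : NoExpr i' a :=
  noExpr_of_forall_not_exec fun j hj =>
    let ⟨k, hk, _⟩ := h a j hj
    hn.not_exec k hk

lemma simulates_exec_of_rwRoot {i i' : Interaction L M} (h : RwRoot i i') :
    Simulates Exec i i' ∧ Simulates Exec i' i := by
  cases h with
  | strictEmptyL x =>
    refine ⟨fun a j hj => ?_, fun a j hj => ⟨_, .strictR hj (.empty _), .refl _⟩⟩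
    cases hj with
    | strictL hj1 => nomatch hj1
    | strictR hj2 _ => exact ⟨_, hj2, .refl _⟩
  | strictEmptyR x =>
    refine ⟨fun a j hj => ?_, fun a j hj =>
      ⟨_, .strictL hj, .symm _ _ (.rel _ _ (.strictEmptyR _))⟩⟩
    cases hj with
    | strictL hj1 => exact ⟨_, hj1, .rel _ _ (.strictEmptyR _)⟩
    | strictR hj2 _ => nomatch hj2
  | crEmptyL ℓ x =>
    refine ⟨fun a j hj => ?_, fun a j hj =>
      ⟨_, .crR hj (.empty _), .symm _ _ (.rel _ _ (.crEmptyL _ _))⟩⟩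
    cases hj with
    | crL hj1 => nomatch hj1
    | crR hj2 hp => cases hp; exact ⟨_, hj2, .rel _ _ (.crEmptyL _ _)⟩
  | crEmptyR ℓ x =>
    refine ⟨fun a j hj => ?_, fun a j hj =>
      ⟨_, .crL hj, .symm _ _ (.rel _ _ (.crEmptyR _ _))⟩⟩
    cases hj with
    | crL hj1 => exact ⟨_, hj1, .rel _ _ (.crEmptyR _ _)⟩
    | crR hj2 _ => nomatch hj2
  | altEmptyLoop x =>
    refine ⟨fun a j hj => ?_, fun a j hj => ⟨_, .altChoiceR hj (.empty a), .refl _⟩⟩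
    cases hj with
    | altChoiceL hj1 _ | altDelay hj1 _ => nomatch hj1
    | altChoiceR hj2 _ => exact ⟨_, hj2, .refl _⟩
  | altLoopEmpty x =>
    refine ⟨fun a j hj => ?_, fun a j hj => ⟨_, .altChoiceL hj (.empty a), .refl _⟩⟩
    cases hj with
    | altChoiceL hj1 _ => exact ⟨_, hj1, .refl _⟩
    | altChoiceR hj2 _ | altDelay _ hj2 => nomatch hj2
  | altEmptyEmpty =>
    refine ⟨fun a j hj => ?_, nofun⟩
    cases hj with
    | altChoiceL hj1 _ | altChoiceR hj1 _ | altDelay hj1 _ => nomatch hj1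
  | loopEmpty =>
    refine ⟨fun a j hj => ?_, nofun⟩
    cases hj with | loop hj1 => nomatch hj1

lemma simulates_exec_loopS (h : Simulates Exec i1 i1') (e : EqvGen Rw i1 i1') :
    Simulates Exec (loopS i1) (loopS i1') := by
  intro a j hj
  cases hj with
  | loop hj1 =>
    obtain ⟨_, hj1', e1⟩ := h a _ hj1
    exact ⟨_, .loop hj1', eqvGen_rw_strict e1 (eqvGen_rw_loopS e)⟩

lemma simulates_exec_strict (h1 : Simulates Exec i1 i1') (h2 : Simulates Exec i2 i2')
    (hev : Evades i1 Set.univ → Evades i1' Set.univ) (e2 : EqvGen Rw i2 i2') :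
    Simulates Exec (strict i1 i2) (strict i1' i2') := by
  intro a j hj
  cases hj with
  | strictL hj1 =>
    obtain ⟨_, hj1', e1⟩ := h1 a _ hj1
    exact ⟨_, .strictL hj1', eqvGen_rw_strict e1 e2⟩
  | strictR hj2 he =>
    obtain ⟨_, hj2', e⟩ := h2 a _ hj2
    exact ⟨_, .strictR hj2' (hev he), e⟩

lemma simulates_exec_cr {ℓ : Set L} (h1 : Simulates Exec i1 i1') (h2 : Simulates Exec i2 i2')
    (hp : Simulates Prune i1 i1') (e2 : EqvGen Rw i2 i2') :
    Simulates Exec (cr ℓ i1 i2) (cr ℓ i1' i2') := by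
  intro a j hj
  cases hj with
  | crL hj1 =>
    obtain ⟨_, hj1', e1⟩ := h1 a _ hj1
    exact ⟨_, .crL hj1', eqvGen_rw_cr e1 e2⟩
  | crR hj2 p1 =>
    obtain ⟨_, hj2', e⟩ := h2 a _ hj2
    obtain ⟨_, p1', e1⟩ := hp _ _ p1
    exact ⟨_, .crR hj2' p1', eqvGen_rw_cr e1 e⟩

lemma simulates_exec_alt (h1 : Simulates Exec i1 i1') (h2 : Simulates Exec i2 i2')
    (h1' : Simulates Exec i1' i1) (h2' : Simulates Exec i2' i2) :
    Simulates Exec (alt i1 i2) (alt i1' i2') := by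
  intro a j hj
  cases hj with
  | altChoiceL hj1 hn2 =>
    obtain ⟨_, hj1', e1⟩ := h1 a _ hj1
    exact ⟨_, .altChoiceL hj1' (hn2.of_simulates h2'), e1⟩
  | altChoiceR hj2 hn1 =>
    obtain ⟨_, hj2', e2⟩ := h2 a _ hj2
    exact ⟨_, .altChoiceR hj2' (hn1.of_simulates h1'), e2⟩
  | altDelay hj1 hj2 =>
    obtain ⟨_, hj1', e1⟩ := h1 a _ hj1
    obtain ⟨_, hj2', e2⟩ := h2 a _ hj2
    exact ⟨_, .altDelay hj1' hj2', eqvGen_rw_alt e1 e2⟩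

lemma simulates_exec_of_rw {i i' : Interaction L M} (h : Rw i i') :
    Simulates Exec i i' ∧ Simulates Exec i' i := by
  induction h with
  | loopCongr hr ih =>
    exact ⟨simulates_exec_loopS ih.1 (.rel _ _ hr),
      simulates_exec_loopS ih.2 (.symm _ _ (.rel _ _ hr))⟩
  | strictCongrL hr ih =>
    exact ⟨simulates_exec_strict ih.1 (.refl _) (evades_iff_of_rw hr _).1 (.refl _),
      simulates_exec_strict ih.2 (.refl _) (evades_iff_of_rw hr _).2 (.refl _)⟩
  | strictCongrR hr ih =>
    exact ⟨simulates_exec_strict (.refl _) ih.1 id (.rel _ _ hr),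
      simulates_exec_strict (.refl _) ih.2 id (.symm _ _ (.rel _ _ hr))⟩
  | crCongrL hr ih =>
    exact ⟨simulates_exec_cr ih.1 (.refl _) (simulates_prune_of_rw hr).1 (.refl _),
      simulates_exec_cr ih.2 (.refl _) (simulates_prune_of_rw hr).2 (.refl _)⟩
  | crCongrR hr ih =>
    exact ⟨simulates_exec_cr (.refl _) ih.1 (.refl _) (.rel _ _ hr),
      simulates_exec_cr (.refl _) ih.2 (.refl _) (.symm _ _ (.rel _ _ hr))⟩
  | altCongrL _ ih =>
    exact ⟨simulates_exec_alt ih.1 (.refl _) ih.2 (.refl _),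
      simulates_exec_alt ih.2 (.refl _) ih.1 (.refl _)⟩
  | altCongrR _ ih =>
    exact ⟨simulates_exec_alt (.refl _) ih.1 (.refl _) ih.2,
      simulates_exec_alt (.refl _) ih.2 (.refl _) ih.1⟩
  | _ => exact simulates_exec_of_rwRoot (by constructor)

lemma simulates_exec_of_eqvGen {i i' : Interaction L M} (h : EqvGen Rw i i') :
    Simulates Exec i i' ∧ Simulates Exec i' i := by
  induction h with
  | rel _ _ h => exact simulates_exec_of_rw h
  | refl => exact ⟨.refl _, .refl _⟩
  | symm _ _ _ ih => exact ih.symm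
  | trans _ _ _ _ _ ih1 ih2 => exact ⟨ih1.1.trans ih2.1, ih2.2.trans ih1.2⟩

end Execution

lemma Sem.of_eqvGen {i i' : Interaction L M} {t : List (MyAction L M)} (hs : Sem i t)
    (h : EqvGen Rw i i') : Sem i' t := by
  induction hs generalizing i' with
  | nil he => exact .nil ((evades_iff_of_eqvGen h _).1 he)
  | cons hj _ ih =>
    obtain ⟨_, hj', e⟩ := (simulates_exec_of_eqvGen h).1 _ _ hj
    exact .cons hj' (ih e)

end Interaction

theorem rw_preserves_sem_general {L M : Type} (i i' : Interaction L M)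
    (h : Rw i i') :
    {t | Sem i t} = {t | Sem i' t} := by
  ext t
  exact ⟨fun hs => hs.of_eqvGen (.rel _ _ h), fun hs => hs.of_eqvGen (.symm _ _ (.rel _ _ h))⟩

/-- every one-step rewrite of the simplification system preserves the
trace semantics: if `i →_R i'` then `σ(i) = σ(i')`. -/
theorem rw_preserves_sem {L M : Type} [Finite L] [Finite M] (i i' : Interaction L M)
    (h : Rw i i') :
    {t | Sem i t} = {t | Sem i' t} :=
  rw_preserves_sem_general i i' h
end
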